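/- Let X = (X_n)_{n∈ℤ} be a discrete white noise. Then ℙ(∃ α ≥ 0, sup_{n∈ℤ} |X_n|/(1+|n|)^α < ∞) = 1 if and only if there exists ε > 0 such that 𝔼[|X_0|^ε] < ∞; moreover, if 𝔼[|X_0|^ε] = ∞ for every ε > 0, then ℙ(∃ α ≥ 0, sup_{n∈ℤ} |X_n|/(1+|n|)^α < ∞) = 0. -/

import Mathlib

/-!
If `𝔼|X₀|^ε < ∞`, Markov's inequality gives `ℙ(|Xₙ| > (1+|n|)^(2/ε)) ≤ 𝔼|X₀|^ε (1+|n|)^(-2)`,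
which is summable over `ℤ`; by Borel–Cantelli almost surely only finitely many `Xₙ` exceed
this weight, so the sequence is tempered. Conversely, every tempered sequence satisfies
`|Xⱼ| ≤ m (1+j)^k` for all `j ∈ ℕ` and some `k m : ℕ`. If `𝔼|X₀|^(1/(k+1)) = ∞`, the layer-cake
formula gives `∑ⱼ ℙ(|X₀| > m (1+j)^k) = ∞`, so by independence and the second Borel–Cantelli
lemma each of these countably many events is null.
-/

open MeasureTheory ProbabilityTheory Filter Set
open scoped ENNReal

def IsTempered (u : ℤ → ℝ) : Prop :=
  ∃ α : ℝ, 0 ≤ α ∧ ∃ C : ℝ, ∀ n : ℤ, |u n| ≤ C * (1 + |(n : ℝ)|) ^ α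

namespace IsTempered

variable {u : ℤ → ℝ}

theorem of_finite_setOf_lt {α : ℝ} (hα : 0 ≤ α)
    (h : {n : ℤ | (1 + |(n : ℝ)|) ^ α < |u n|}.Finite) : IsTempered u := by
  obtain ⟨C, hC⟩ := (h.image fun n => |u n|).bddAbove
  refine ⟨α, hα, max C 1, fun n => ?_⟩
  have hweight : 1 ≤ (1 + |(n : ℝ)|) ^ α :=
    Real.one_le_rpow (le_add_of_nonneg_right (abs_nonneg _)) hα
  by_cases hn : (1 + |(n : ℝ)|) ^ α < |u n|
  · calc |u n| ≤ max C 1 := (hC (mem_image_of_mem _ hn)).trans (le_max_left _ _)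
      _ ≤ max C 1 * (1 + |(n : ℝ)|) ^ α := le_mul_of_one_le_right (by positivity) hweight
  · calc |u n| ≤ (1 + |(n : ℝ)|) ^ α := not_lt.mp hn
      _ ≤ max C 1 * (1 + |(n : ℝ)|) ^ α :=
          le_mul_of_one_le_left (by positivity) (le_max_right _ _)

theorem exists_nat_bound (hu : IsTempered u) :
    ∃ k m : ℕ, ∀ n : ℤ, |u n| ≤ m * (1 + |(n : ℝ)|) ^ k := by
  obtain ⟨α, -, C, hC⟩ := hu
  refine ⟨⌈α⌉₊, ⌈C⌉₊, fun n => (hC n).trans ?_⟩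
  have hbase : 1 ≤ 1 + |(n : ℝ)| := le_add_of_nonneg_right (abs_nonneg _)
  rw [← Real.rpow_natCast]
  exact mul_le_mul (Nat.le_ceil C) (Real.rpow_le_rpow_of_exponent_le hbase (Nat.le_ceil α))
    (by positivity) (by positivity)

end IsTempered

theorem summable_inv_one_add_abs_rpow {s : ℝ} (hs : 1 < s) :
    Summable fun n : ℤ => ((1 + |(n : ℝ)|) ^ s)⁻¹ := by
  have hnat : Summable fun n : ℕ => ((1 + (n : ℝ)) ^ s)⁻¹ := by
    refine ((Real.summable_one_div_nat_add_rpow 1 s).mpr hs).congr fun n => ?_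
    rw [abs_of_nonneg (by positivity), one_div, add_comm]
  rw [summable_int_iff_summable_nat_and_neg]
  simpa using And.intro hnat hnat

theorem ProbabilityTheory.iIndepFun.iIndepSet_preimage {Ω ι β : Type*} [MeasurableSpace Ω]
    [MeasurableSpace β] {μ : Measure Ω} {f : ι → Ω → β} (hf : iIndepFun f μ)
    (hmeas : ∀ i, Measurable (f i)) {S : ι → Set β} (hS : ∀ i, MeasurableSet (S i)) :
    iIndepSet (fun i => f i ⁻¹' S i) μ :=
  (iIndepSet_iff_meas_biInter fun i => hmeas i (hS i)).2 fun s =>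
    hf.measure_inter_preimage_eq_mul s fun i _ => hS i

section

variable {Ω : Type*} [MeasurableSpace Ω] {μ : Measure Ω}

theorem meas_lt_abs_le_lintegral_rpow_div {Y : Ω → ℝ} (hY : AEMeasurable Y μ) {ε t : ℝ}
    (hε : 0 < ε) (ht : 0 < t) :
    μ {ω | t < |Y ω|} ≤ (∫⁻ ω, ENNReal.ofReal (|Y ω| ^ ε) ∂μ) / ENNReal.ofReal (t ^ ε) := by
  calc μ {ω | t < |Y ω|} ≤ μ {ω | ENNReal.ofReal (t ^ ε) ≤ ENNReal.ofReal (|Y ω| ^ ε)} :=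
        measure_mono fun ω hω => ENNReal.ofReal_le_ofReal (Real.rpow_le_rpow ht.le hω.le hε.le)
    _ ≤ _ := meas_ge_le_lintegral_div (by fun_prop)
        (by simpa using Real.rpow_pos_of_pos ht ε) ENNReal.ofReal_ne_top

theorem lintegral_ofReal_le_tsum_meas_le {f : Ω → ℝ} (hf_nn : 0 ≤ᵐ[μ] f)
    (hf : AEMeasurable f μ) :
    ∫⁻ ω, ENNReal.ofReal (f ω) ∂μ ≤ ∑' j : ℕ, μ {ω | (j : ℝ) ≤ f ω} := by
  have hcover : Ioi (0 : ℝ) ⊆ ⋃ j : ℕ, Ico (j : ℝ) (j + 1) := fun t ht =>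
    mem_iUnion.mpr ⟨⌊t⌋₊, Nat.floor_le (le_of_lt ht), Nat.lt_floor_add_one t⟩
  rw [lintegral_eq_lintegral_meas_le μ hf_nn hf]
  calc ∫⁻ t in Ioi 0, μ {ω | t ≤ f ω}
      ≤ ∫⁻ t in ⋃ j : ℕ, Ico (j : ℝ) (j + 1), μ {ω | t ≤ f ω} := lintegral_mono_set hcover
    _ ≤ ∑' j : ℕ, ∫⁻ t in Ico (j : ℝ) (j + 1), μ {ω | t ≤ f ω} := lintegral_iUnion_le _ _
    _ ≤ ∑' j : ℕ, ∫⁻ _ in Ico (j : ℝ) (j + 1), μ {ω | (j : ℝ) ≤ f ω} :=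
        ENNReal.tsum_le_tsum fun j => setLIntegral_mono' measurableSet_Ico
          fun t ht => measure_mono fun ω hω => ht.1.trans hω
    _ = ∑' j : ℕ, μ {ω | (j : ℝ) ≤ f ω} := by simp

theorem tsum_meas_mul_pow_lt_abs_eq_top [IsFiniteMeasure μ] {Y : Ω → ℝ} (hY : AEMeasurable Y μ)
    (k m : ℕ)     (hmoment : ∫⁻ ω, ENNReal.ofReal (|Y ω| ^ ((k : ℝ) + 1)⁻¹) ∂μ = ⊤) :
    ∑' j : ℕ, μ {ω | m * (1 + (j : ℝ)) ^ k < |Y ω|} = ⊤ := by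
  set ε : ℝ := ((k : ℝ) + 1)⁻¹
  have hshift : ∀ j : ℕ,
      {ω | ((j + (m + 1) : ℕ) : ℝ) ≤ |Y ω| ^ ε} ⊆ {ω | m * (1 + (j : ℝ)) ^ k < |Y ω|} := by
    intro j ω hω
    have hroot : (|Y ω| ^ ε) ^ (k + 1) = |Y ω| := by
      rw [← Real.rpow_natCast, ← Real.rpow_mul (abs_nonneg _), Nat.cast_succ,
        inv_mul_cancel₀ (by positivity), Real.rpow_one]
    have hnat : m * (1 + j) ^ k < (j + (m + 1)) ^ (k + 1) :=
      calc m * (1 + j) ^ k ≤ m * (j + (m + 1)) ^ k :=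
            Nat.mul_le_mul_left m (Nat.pow_le_pow_left (by omega) k)
        _ < (j + (m + 1)) * (j + (m + 1)) ^ k := by gcongr; omega
        _ = (j + (m + 1)) ^ (k + 1) := (pow_succ' _ _).symm
    calc (m : ℝ) * (1 + (j : ℝ)) ^ k < ((j + (m + 1) : ℕ) : ℝ) ^ (k + 1) := mod_cast hnat
      _ ≤ (|Y ω| ^ ε) ^ (k + 1) := by gcongr; exact hω
      _ = |Y ω| := hroot
  by_contra htail
  refine absurd hmoment (ne_of_lt ?_)
  calc ∫⁻ ω, ENNReal.ofReal (|Y ω| ^ ε) ∂μ ≤ ∑' j : ℕ, μ {ω | (j : ℝ) ≤ |Y ω| ^ ε} :=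
        lintegral_ofReal_le_tsum_meas_le (ae_of_all _ fun ω => by positivity) (by fun_prop)
    _ = ∑ j ∈ Finset.range (m + 1), μ {ω | (j : ℝ) ≤ |Y ω| ^ ε}
          + ∑' j : ℕ, μ {ω | ((j + (m + 1) : ℕ) : ℝ) ≤ |Y ω| ^ ε} :=
        (ENNReal.summable.sum_add_tsum_nat_add').symm
    _ ≤ ∑ _j ∈ Finset.range (m + 1), μ univ
          + ∑' j : ℕ, μ {ω | m * (1 + (j : ℝ)) ^ k < |Y ω|} :=
        add_le_add (Finset.sum_le_sum fun j _ => measure_mono (subset_univ _))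
          (ENNReal.tsum_le_tsum fun j => measure_mono (hshift j))
    _ < ⊤ := ENNReal.add_lt_top.2
        ⟨ENNReal.sum_lt_top.2 fun _ _ => measure_lt_top μ univ, lt_top_iff_ne_top.2 htail⟩

theorem measure_iInter_compl_eq_zero_of_iIndepSet {s : ℕ → Set Ω}
    (hsm : ∀ n, MeasurableSet (s n)) (hs : iIndepSet s μ) (hsum : ∑' n, μ (s n) = ∞) :
    μ (⋂ n, (s n)ᶜ) = 0 := by
  have := hs.isProbabilityMeasure
  rw [← compl_iUnion, prob_compl_eq_zero_iff (MeasurableSet.iUnion hsm)]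
  exact le_antisymm prob_le_one
    ((measure_limsup_eq_one hsm hs hsum).symm.trans_le (measure_mono limsup_le_iSup))

theorem ae_isTempered_of_lintegral_rpow_lt_top {X : ℤ → Ω → ℝ} (hX0 : AEMeasurable (X 0) μ)
    (hident : ∀ n, IdentDistrib (X n) (X 0) μ μ)
    {ε : ℝ} (hε : 0 < ε) (hmoment : ∫⁻ ω, ENNReal.ofReal (|X 0 ω| ^ ε) ∂μ < ⊤) :
    ∀ᵐ ω ∂μ, IsTempered (X · ω) := by
  have htail : ∀ n : ℤ, μ {ω | (1 + |(n : ℝ)|) ^ (2 / ε) < |X n ω|}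
      ≤ (∫⁻ ω, ENNReal.ofReal (|X 0 ω| ^ ε) ∂μ)
        * ENNReal.ofReal (((1 + |(n : ℝ)|) ^ (2 : ℝ))⁻¹) := by
    intro n
    have hpow : ((1 + |(n : ℝ)|) ^ (2 / ε)) ^ ε = (1 + |(n : ℝ)|) ^ (2 : ℝ) := by
      rw [← Real.rpow_mul (by positivity), div_mul_cancel₀ _ hε.ne']
    calc μ {ω | (1 + |(n : ℝ)|) ^ (2 / ε) < |X n ω|}
        = μ {ω | (1 + |(n : ℝ)|) ^ (2 / ε) < |X 0 ω|} :=
          (hident n).measure_mem_eq (measurableSet_lt measurable_const measurable_abs)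
      _ ≤ _ := meas_lt_abs_le_lintegral_rpow_div hX0 hε (by positivity)
      _ = _ := by rw [hpow, div_eq_mul_inv, ENNReal.ofReal_inv_of_pos (by positivity)]
  have hsum : ∑' n : ℤ, μ {ω | (1 + |(n : ℝ)|) ^ (2 / ε) < |X n ω|} ≠ ⊤ := by
    refine ne_top_of_le_ne_top ?_ (ENNReal.tsum_le_tsum htail)
    rw [ENNReal.tsum_mul_left, ← ENNReal.ofReal_tsum_of_nonneg (fun n => by positivity)
      (summable_inv_one_add_abs_rpow one_lt_two)]
    exact ENNReal.mul_ne_top hmoment.ne ENNReal.ofReal_ne_top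
  filter_upwards [ae_finite_setOfPred_mem hsum] with ω hω
  exact IsTempered.of_finite_setOf_lt (by positivity) hω

theorem measure_isTempered_eq_zero {X : ℤ → Ω → ℝ} (hmeas : ∀ n, Measurable (X n))
    (hindep : iIndepFun X μ) (hident : ∀ n, IdentDistrib (X n) (X 0) μ μ)
    (hmoment : ∀ ε : ℝ, 0 < ε → ∫⁻ ω, ENNReal.ofReal (|X 0 ω| ^ ε) ∂μ = ⊤) :
    μ {ω | IsTempered (X · ω)} = 0 := by
  have := hindep.isProbabilityMeasure
  have hnull : ∀ k m : ℕ, μ {ω | ∀ j : ℕ, |X j ω| ≤ m * (1 + (j : ℝ)) ^ k} = 0 := by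
    intro k m
    set S : ℕ → Set ℝ := fun j => {x | m * (1 + (j : ℝ)) ^ k < |x|}
    have hS : ∀ j, MeasurableSet (S j) := fun j => measurableSet_lt measurable_const measurable_abs
    have hdiv : ∑' j : ℕ, μ (X j ⁻¹' S j) = ⊤ := by
      rw [tsum_congr fun j : ℕ => (hident j).measure_mem_eq (hS j)]
      exact tsum_meas_mul_pow_lt_abs_eq_top (hmeas 0).aemeasurable k m
        (hmoment _ (by positivity))
    have hindep_nat : iIndepFun (fun j : ℕ => X j) μ := hindep.precomp Nat.cast_injective
    refine measure_mono_null (fun ω hω => ?_) (measure_iInter_compl_eq_zero_of_iIndepSet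
      (fun j => hmeas j (hS j)) (hindep_nat.iIndepSet_preimage (fun j => hmeas j) hS) hdiv)
    simpa [S] using hω
  refine measure_mono_null (fun ω hω => ?_)
    (measure_iUnion_null fun k => measure_iUnion_null fun m => hnull k m)
  obtain ⟨k, m, hkm⟩ := IsTempered.exists_nat_bound hω
  simp only [mem_iUnion]
  exact ⟨k, m, fun j => by simpa using hkm j⟩

end

/-- A discrete white noise `X` is almost surely tempered iff `𝔼[|X_0|^ε] < ∞`
for some `ε > 0`; if all positive absolute moments of `X_0` are infinite, then the
probability of being tempered is `0`. -/
theorem tempered_iff_finite_eps_moment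
    {Ω : Type*} [MeasurableSpace Ω] (P : Measure Ω) [IsProbabilityMeasure P]
    (X : ℤ → Ω → ℝ) (hmeas : ∀ n, Measurable (X n))
    (hindep : iIndepFun X P)
    (hident : ∀ n : ℤ, IdentDistrib (X n) (X 0) P P) :
    (P {ω | ∃ α : ℝ, 0 ≤ α ∧ ∃ C : ℝ, ∀ n : ℤ, |X n ω| ≤ C * (1 + |(n : ℝ)|) ^ α} = 1 ↔
      ∃ ε : ℝ, 0 < ε ∧ (∫⁻ ω, ENNReal.ofReal (|X 0 ω| ^ ε) ∂P) < ⊤) ∧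
    ((∀ ε : ℝ, 0 < ε → (∫⁻ ω, ENNReal.ofReal (|X 0 ω| ^ ε) ∂P) = ⊤) →
      P {ω | ∃ α : ℝ, 0 ≤ α ∧ ∃ C : ℝ, ∀ n : ℤ, |X n ω| ≤ C * (1 + |(n : ℝ)|) ^ α} = 0) := by
  have hzero := measure_isTempered_eq_zero hmeas hindep hident
  refine ⟨⟨fun hone => ?_, fun ⟨ε, hε, hmoment⟩ => ?_⟩, hzero⟩
  · by_contra! hinfinite
    exact one_ne_zero (hone.symm.trans (hzero fun ε hε => top_le_iff.mp (hinfinite ε hε)))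
  · exact (measure_congr (ae_eq_univ.2 (ae_isTempered_of_lintegral_rpow_lt_top
      (hmeas 0).aemeasurable hident hε hmoment))).trans measure_univ
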